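/- Let (R,𝔪,k) be a noetherian local ring, r ∈ 𝔪, and S = R/(r). If Tor_2^R(S, k) = 0 and r ≠ 0, then r is a nonzerodivisor on R. -/

import Mathlib

/-!
Let `Z` be the annihilator of `r` and compute `Tor` with a projective resolution `P` of `k`.
If `b = d₁ x` is a boundary of `P₀` with `r • b = 0`, then `r • x` is a cycle, say `d₂ y`; the class
of `y` in `P ⊗ S` is a cycle, so `Tor₂(S, k) = 0` makes it a boundary, i.e. `y = d₃ w + r • y'`.
Then `r • (x - d₂ y') = 0`, and since `P₁` is flat, `x - d₂ y' ∈ Z • P₁`, so `b ∈ Z • d₁(P₁)`.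
For `z ∈ Z ≤ 𝔪` (as `r ≠ 0`) and `e ∈ P₀` over `1 ∈ k`, this applies to `b = z • e`; pushing it
to `R` along a lift `φ : P₀ → R` of `P₀ → k` (as `P₀` is projective), where `φ e` is a unit and
`φ (d₁(P₁)) ≤ 𝔪`, gives `Z ≤ 𝔪 • Z`. Since `Z` is finitely generated, Nakayama gives `Z = 0`.
-/

open CategoryTheory Limits IsLocalRing TensorProduct MonoidalCategory

universe u

namespace TensorProduct

variable {R : Type*} [CommRing R] (I : Ideal R) {M : Type*} [AddCommGroup M] [Module R M]

lemma exists_one_tmul_eq (t : (R ⧸ I) ⊗[R] M) : ∃ m : M, (1 : R ⧸ I) ⊗ₜ[R] m = t := by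
  obtain ⟨m, hm⟩ := Submodule.Quotient.mk_surjective _ (quotTensorEquivQuotSMul M I t)
  exact ⟨m, by rw [← quotTensorEquivQuotSMul_symm_mk, hm, LinearEquiv.symm_apply_apply]⟩

lemma mem_smul_top_of_one_tmul_eq_zero {m : M} (h : (1 : R ⧸ I) ⊗ₜ[R] m = 0) :
    m ∈ I • (⊤ : Submodule R M) := by
  rw [← Submodule.Quotient.mk_eq_zero, ← quotTensorEquivQuotSMul_mk_one_tmul, h, map_zero]

end TensorProduct

lemma Module.Flat.mem_annihilator_smul_top_of_smul_eq_zero {R : Type*} [CommRing R]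
    {M : Type*} [AddCommGroup M] [Module R M] [Module.Flat R M] {r : R} {m : M}
    (h : r • m = 0) : m ∈ (R ∙ r).annihilator • (⊤ : Submodule R M) := by
  obtain ⟨k, a, y, hm, ha⟩ := Module.Flat.isTrivialRelation_of_sum_smul_eq_zero
    (f := fun _ : Unit => r) (x := fun _ => m) (by simpa using h)
  rw [show m = _ from hm ()]
  refine Submodule.sum_mem _ fun j _ => Submodule.smul_mem_smul ?_ Submodule.mem_top
  rw [Submodule.mem_annihilator_span_singleton, smul_eq_mul, mul_comm]
  simpa using ha j

theorem ChainComplex.mem_annihilator_smul_range_d_of_exactAt {R : Type u} [CommRing R] (r : R)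
    {C : ChainComplex (ModuleCat.{u} R) ℕ} (hC : C.ExactAt 1) [Module.Flat R (C.X 1)]
    (hCr : ((((tensoringLeft (ModuleCat.{u} R)).obj (ModuleCat.of R (R ⧸ Ideal.span {r}))
      ).mapHomologicalComplex (ComplexShape.down ℕ)).obj C).ExactAt 2)
    {b : C.X 0} (hb : b ∈ LinearMap.range (C.d 1 0).hom) (hrb : r • b = 0) :
    b ∈ (R ∙ r).annihilator • LinearMap.range (C.d 1 0).hom := by
  rw [HomologicalComplex.exactAt_iff' _ 2 1 0 (by simp) (by simp),
    ShortComplex.moduleCat_exact_iff] at hC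
  rw [HomologicalComplex.exactAt_iff' _ 3 2 1 (by simp) (by simp),
    ShortComplex.moduleCat_exact_iff] at hCr
  have hdd : ∀ {i j k} (z : C.X i), C.d j k (C.d i j z) = 0 := fun z => by
    rw [← ModuleCat.comp_apply, C.d_comp_d]; rfl
  obtain ⟨x, rfl⟩ := hb
  obtain ⟨y, hy⟩ : ∃ y, C.d 2 1 y = r • x := hC (r • x) (by
    change C.d 1 0 (r • x) = 0
    rw [map_smul]; exact hrb)
  obtain ⟨t, ht⟩ := hCr ((1 : R ⧸ Ideal.span {r}) ⊗ₜ[R] y) (by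
    change (1 : R ⧸ Ideal.span {r}) ⊗ₜ[R] C.d 2 1 y = 0
    rw [hy, ← smul_tmul, Algebra.smul_def, mul_one, Ideal.Quotient.algebraMap_eq,
      Ideal.Quotient.mk_singleton_self, zero_tmul])
  obtain ⟨w, rfl⟩ := exists_one_tmul_eq _ t
  replace ht : (1 : R ⧸ Ideal.span {r}) ⊗ₜ[R] C.d 3 2 w = 1 ⊗ₜ y := ht
  have hyw : y - C.d 3 2 w ∈ Ideal.span {r} • (⊤ : Submodule R (C.X 2)) :=
    mem_smul_top_of_one_tmul_eq_zero _ (by rw [tmul_sub, ht, sub_self])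
  rw [Submodule.ideal_span_singleton_smul] at hyw
  obtain ⟨y', -, hy'⟩ := (Submodule.mem_smul_pointwise_iff_exists _ _ _).1 hyw
  have hrx : r • (x - C.d 2 1 y') = 0 := by
    rw [smul_sub, ← map_smul, hy', map_sub, hy, hdd, sub_zero, sub_self]
  have hmap := Submodule.mem_map_of_mem (f := (C.d 1 0).hom)
    (Module.Flat.mem_annihilator_smul_top_of_smul_eq_zero hrx)
  rwa [Submodule.map_smul'', Submodule.map_top, map_sub, hdd, sub_zero] at hmap

section IsLocalRing

variable {R : Type u} [CommRing R] [IsLocalRing R] {r : R}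

lemma annihilator_span_singleton_le_maximalIdeal (hr0 : r ≠ 0) :
    (R ∙ r).annihilator ≤ maximalIdeal R :=
  le_maximalIdeal (by rwa [Ne, Submodule.annihilator_eq_top_iff, Submodule.span_singleton_eq_bot])

theorem annihilator_le_maximalIdeal_smul_annihilator (hr0 : r ≠ 0) {P : Type u} [AddCommGroup P]
    [Module R P] [Module.Projective R P] (π : P →ₗ[R] ResidueField R)
    (hπ : Function.Surjective π)
    (h : ∀ b ∈ LinearMap.ker π, r • b = 0 → b ∈ (R ∙ r).annihilator • LinearMap.ker π) :
    (R ∙ r).annihilator ≤ maximalIdeal R • (R ∙ r).annihilator := by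
  intro z hz
  obtain ⟨e, he⟩ := hπ 1
  obtain ⟨φ, hφ⟩ := Module.projective_lifting_property (Algebra.linearMap R (ResidueField R)) π
    residue_surjective
  have hφ_apply (p : P) : residue R (φ p) = π p := LinearMap.congr_fun hφ p
  have hze : z • e ∈ LinearMap.ker π := by
    rw [LinearMap.mem_ker, map_smul, he, Algebra.smul_def, mul_one, ResidueField.algebraMap_eq,
      residue_eq_zero_iff]
    exact annihilator_span_singleton_le_maximalIdeal hr0 hz
  have hrze : r • z • e = 0 := by
    rw [smul_smul, mul_comm, ← smul_eq_mul, (Submodule.mem_annihilator_span_singleton r z).1 hz,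
      zero_smul]
  have hker : (LinearMap.ker π).map φ ≤ maximalIdeal R := by
    rintro _ ⟨b, hb, rfl⟩
    rw [← residue_eq_zero_iff, hφ_apply]
    exact hb
  have hunit : IsUnit (φ e) := by
    rw [← residue_ne_zero_iff_isUnit, hφ_apply, he]
    exact one_ne_zero
  have hmem : z * φ e ∈ (R ∙ r).annihilator * maximalIdeal R := by
    have := Submodule.mem_map_of_mem (f := φ) (h _ hze hrze)
    rw [Submodule.map_smul'', map_smul, smul_eq_mul] at this
    exact Ideal.mul_mono_right hker this
  rw [Ideal.smul_eq_mul, mul_comm]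
  exact (Ideal.mul_unit_mem_iff_mem _ hunit).1 hmem

end IsLocalRing

theorem nonzerodivisor_of_tor_two_zero_general (R : Type u) [CommRing R] [IsNoetherianRing R]
    [IsLocalRing R] (r : R) (hr0 : r ≠ 0)
    (h : IsZero (((Tor (ModuleCat.{u} R) 2).obj
        (ModuleCat.of R (R ⧸ Ideal.span {r}))).obj
      (ModuleCat.of R (IsLocalRing.ResidueField R)))) :
    ∀ x : R, r * x = 0 → x = 0 := by
  let P := ProjectiveResolution.of (ModuleCat.of R (ResidueField R))
  have hP : ((((tensoringLeft (ModuleCat.{u} R)).obj (ModuleCat.of R (R ⧸ Ideal.span {r}))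
      ).mapHomologicalComplex (ComplexShape.down ℕ)).obj P.complex).ExactAt 2 :=
    (HomologicalComplex.exactAt_iff_isZero_homology _ _).2 (h.of_iso (P.isoLeftDerivedObj _ 2).symm)
  -- the codomain of `P.π.f 0` is `k` only after unfolding `single₀`
  let π : P.complex.X 0 →ₗ[R] ResidueField R := (P.π.f 0).hom
  have hker : LinearMap.range (P.complex.d 1 0).hom = LinearMap.ker π :=
    P.exact₀.moduleCat_range_eq_ker
  have hle := annihilator_le_maximalIdeal_smul_annihilator hr0 π
    ((ModuleCat.epi_iff_surjective (P.π.f 0)).1 inferInstance) (by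
      rw [← hker]
      exact fun b hb hrb =>
        ChainComplex.mem_annihilator_smul_range_d_of_exactAt r (P.complex_exactAt_succ 0) hP hb hrb)
  have hbot : (R ∙ r).annihilator = ⊥ := Submodule.eq_bot_of_le_smul_of_le_jacobson_bot _ _
    (IsNoetherian.noetherian _) hle (maximalIdeal_le_jacobson ⊥)
  intro x hx
  rw [← Submodule.mem_bot R, ← hbot, Submodule.mem_annihilator_span_singleton, smul_eq_mul,
    mul_comm, hx]

/-- Let `(R, 𝔪, k)` be a noetherian local ring, `r ∈ 𝔪`, and `S = R/(r)`.
If `Tor₂^R(S, k) = 0` and `r ≠ 0`, then `r` is a nonzerodivisor on `R`. -/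
theorem nonzerodivisor_of_tor_two_zero (R : Type u) [CommRing R] [IsNoetherianRing R]
    [IsLocalRing R] (r : R) (hr : r ∈ IsLocalRing.maximalIdeal R) (hr0 : r ≠ 0)
    (h : IsZero (((Tor (ModuleCat.{u} R) 2).obj
        (ModuleCat.of R (R ⧸ Ideal.span {r}))).obj
      (ModuleCat.of R (IsLocalRing.ResidueField R)))) :
    ∀ x : R, r * x = 0 → x = 0 :=
  nonzerodivisor_of_tor_two_zero_general R r hr0 h
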